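/- arXiv:1907.11801 — 2 statements merged into one kernel-verified Lean document; each statement's English description precedes it below -/
import Mathlib

section
/- Let W be a finite Coxeter group, w ∈ W with w ≠ e, and let t be a reflection lying in the parabolic subgroup W_{D_L(w)}. Then the map v ↦ tv is an involution of the lower Bruhat interval [e, w] with no fixed points; consequently Σ_{v ≤ w} (−1)^{ℓ(v)} = 0. -/
open CoxeterSystem

variable {B W : Type*} [Group W] {M : CoxeterMatrix B}

/-- A directed edge of the Bruhat graph: `v = t * u` for a reflection `t`, with length increase. -/
def bruhatEdge (cs : CoxeterSystem M W) (u v : W) : Prop :=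
  ∃ t : W, cs.IsReflection t ∧ v = t * u ∧ cs.length u < cs.length v

/-- Bruhat order: reflexive-transitive closure of Bruhat edges. -/
def bruhatLE (cs : CoxeterSystem M W) : W → W → Prop :=
  Relation.ReflTransGen (bruhatEdge cs)

/-- The standard parabolic subgroup generated by the simple reflections indexed by `I`. -/
def parabolic (cs : CoxeterSystem M W) (I : Set B) : Subgroup W :=
  Subgroup.closure (cs.simple '' I)

/-- The parabolic double coset `W_I x W_J`. -/
def doubleCoset (cs : CoxeterSystem M W) (I J : Set B) (x : W) : Set W :=
  {w | ∃ u ∈ parabolic cs I, ∃ v ∈ parabolic cs J, w = u * x * v}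

/-!
If `s` is a left descent of `w` and `v ≤ w`, then `s v ≤ w` (lifting property), so `[e, w]` is
stable under left multiplication by `W_{D_L(w)}`. A reflection `t` of that subgroup then pairs
`v` with `t v ≠ v` inside `[e, w]`, and the two lengths have opposite parity, so the signs cancel.

The lifting property comes from Humphreys' one-step argument: for a Bruhat edge `u → t u` and a
simple reflection `s`, either `s u = t u` or `s u → s t u` is again an edge. The case analysis
needs the strong exchange property, which comes from the reflection cocycle: a homomorphism
`W → ({±1}^W) ⋊ W` whose first component at `w`, evaluated at `t`, is `-1` to the number of
occurrences of `t` in the left inversion sequence of any word for `w`. It equals `-1` at every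
left inversion `t` of `w`, so such a `t` occurs in every such sequence.
-/

lemma SemidirectProduct.left_pow {N G : Type*} [CommGroup N] [Group G] {φ : G →* MulAut N}
    (x : N ⋊[φ] G) (m : ℕ) : (x ^ m).left = ∏ k ∈ Finset.range m, φ (x.right ^ k) x.left := by
  induction m with
  | zero => rfl
  | succ m ih =>
    rw [pow_succ, SemidirectProduct.mul_left, ih, Finset.prod_range_succ,
      ← SemidirectProduct.rightHom_eq_right, map_pow]

lemma pow_mul_mul_inv_pow_of_mul_mul_inv_eq_inv {G : Type*} [Group G] {p r : G}
    (h : r * p * r⁻¹ = p⁻¹) (k n : ℕ) : p ^ k * (p ^ n * r) * (p ^ k)⁻¹ = p ^ (n + 2 * k) * r := by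
  have hk : r * (p ^ k)⁻¹ * r⁻¹ = p ^ k := by
    rw [← inv_pow, ← conj_pow, show r * p⁻¹ * r⁻¹ = (r * p * r⁻¹)⁻¹ by group, h, inv_inv]
  calc p ^ k * (p ^ n * r) * (p ^ k)⁻¹ = p ^ k * p ^ n * (r * (p ^ k)⁻¹ * r⁻¹) * r := by group
    _ = p ^ (n + 2 * k) * r := by rw [hk, ← pow_add, ← pow_add]; ring_nf

lemma Finset.prod_range_two_mul {M : Type*} [CommMonoid M] (f : ℕ → M) (m : ℕ) :
    ∏ k ∈ range m, (f (2 * k) * f (2 * k + 1)) = ∏ n ∈ range (2 * m), f n := by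
  induction m with
  | zero => rfl
  | succ m ih =>
    rw [prod_range_succ, ih, Nat.mul_succ, prod_range_succ, prod_range_succ, mul_assoc]

lemma Finset.prod_range_two_mul_of_periodic {M : Type*} [CommMonoid M] {f : ℕ → M} {m : ℕ}
    (hf : Function.Periodic f m) :
    ∏ n ∈ range (2 * m), f n = (∏ n ∈ range m, f n) ^ 2 := by
  rw [two_mul, prod_range_add, sq]
  congr 1
  exact prod_congr rfl fun n _ => by rw [add_comm]; exact hf n

def precompConj (W : Type*) [Group W] : W →* MulAut (W → ℤˣ) where
  toFun u :=
    { toFun := fun f x => f (u⁻¹ * x * u)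
      invFun := fun f x => f (u * x * u⁻¹)
      left_inv := fun f => by funext x; group
      right_inv := fun f => by funext x; group
      map_mul' := fun _ _ => rfl }
  map_one' := by ext f x; simp
  map_mul' := fun u v => by ext f x; simp [mul_assoc]

lemma precompConj_apply (u : W) (f : W → ℤˣ) (x : W) : precompConj W u f x = f (u⁻¹ * x * u) :=
  rfl

lemma precompConj_mulSingle [DecidableEq W] (u c : W) (a : ℤˣ) :
    precompConj W u (Pi.mulSingle c a) = Pi.mulSingle (u * c * u⁻¹) a := by
  funext x
  simp only [precompConj_apply, Pi.mulSingle_apply]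
  congr 1
  exact propext ⟨fun h => by rw [← h]; group, fun h => by rw [h]; group⟩

namespace CoxeterSystem

section ReflectionCocycle

variable (cs : CoxeterSystem M W) [DecidableEq W]

def reflectionCocycleGen (i : B) : (W → ℤˣ) ⋊[precompConj W] W :=
  ⟨Pi.mulSingle (cs.simple i) (-1), cs.simple i⟩

/- With `r = s i` and `p = s i * s j`, the first component of `(gen i * gen j) ^ M i j` is the
product of the indicators `Pi.mulSingle (p ^ n * r) (-1)` over `n < 2 * M i j`. As `p ^ M i j = 1`
the factors repeat with period `M i j`, so the product is a square in `W → ℤˣ`, hence trivial. -/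
lemma isLiftable_reflectionCocycleGen : M.IsLiftable cs.reflectionCocycleGen := by
  intro i j
  set r := cs.simple i
  set p := cs.simple i * cs.simple j
  have hpm : p ^ M i j = 1 := cs.simple_mul_simple_pow i j
  have hrp : r * p * r⁻¹ = p⁻¹ := by
    simp only [r, p, cs.inv_simple, mul_inv_rev]
    rw [← mul_assoc, cs.simple_mul_simple_self, one_mul]
  set f : ℕ → W → ℤˣ := fun n => Pi.mulSingle (p ^ n * r) (-1)
  have hgen : cs.reflectionCocycleGen i * cs.reflectionCocycleGen j = ⟨f 0 * f 1, p⟩ := by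
    refine SemidirectProduct.ext ?_ rfl
    simp only [SemidirectProduct.mul_left, reflectionCocycleGen, precompConj_mulSingle, f]
    congr 2
    · simp [r]
    · simp only [p, r, cs.inv_simple, pow_one]
  have hconj (k : ℕ) : precompConj W (p ^ k) (f 0 * f 1) = f (2 * k) * f (2 * k + 1) := by
    simp only [f, map_mul, precompConj_mulSingle, pow_mul_mul_inv_pow_of_mul_mul_inv_eq_inv hrp]
    ring_nf
  have hper : Function.Periodic f (M i j) := fun n => by simp only [f, pow_add, hpm, mul_one]
  rw [hgen]
  refine SemidirectProduct.ext ?_ ?_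
  · rw [SemidirectProduct.left_pow]
    simp only [hconj, Finset.prod_range_two_mul, Finset.prod_range_two_mul_of_periodic hper]
    funext x
    exact Int.units_sq _
  · rw [← SemidirectProduct.rightHom_eq_right, map_pow]
    exact hpm

def reflectionCocycleHom : W →* (W → ℤˣ) ⋊[precompConj W] W :=
  cs.lift ⟨cs.reflectionCocycleGen, cs.isLiftable_reflectionCocycleGen⟩

def reflectionCocycle (w : W) : W → ℤˣ := (cs.reflectionCocycleHom w).left

lemma right_reflectionCocycleHom (w : W) : (cs.reflectionCocycleHom w).right = w := by
  have : SemidirectProduct.rightHom.comp cs.reflectionCocycleHom = MonoidHom.id W :=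
    cs.ext_simple fun i => by
      simp [reflectionCocycleHom, cs.lift_apply_simple, reflectionCocycleGen]
  exact DFunLike.congr_fun this w

lemma reflectionCocycle_mul (u v : W) :
    cs.reflectionCocycle (u * v) =
      cs.reflectionCocycle u * precompConj W u (cs.reflectionCocycle v) := by
  simp only [reflectionCocycle, map_mul, SemidirectProduct.mul_left, right_reflectionCocycleHom]

lemma reflectionCocycle_mul_apply (u v x : W) :
    cs.reflectionCocycle (u * v) x =
      cs.reflectionCocycle u x * cs.reflectionCocycle v (u⁻¹ * x * u) := by
  rw [reflectionCocycle_mul]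
  rfl

lemma reflectionCocycle_simple (i : B) :
    cs.reflectionCocycle (cs.simple i) = Pi.mulSingle (cs.simple i) (-1) := by
  simp [reflectionCocycle, reflectionCocycleHom, cs.lift_apply_simple, reflectionCocycleGen]

lemma reflectionCocycle_wordProd (ω : List B) :
    cs.reflectionCocycle (cs.wordProd ω) =
      ((cs.leftInvSeq ω).map (Pi.mulSingle · (-1))).prod := by
  induction ω with
  | nil => simp [reflectionCocycle, SemidirectProduct.one_left]
  | cons i ω ih =>
    rw [cs.wordProd_cons, reflectionCocycle_mul, ih, reflectionCocycle_simple, leftInvSeq,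
      List.map_cons, List.prod_cons, map_list_prod, List.map_map, List.map_map]
    congr 2
    refine List.map_congr_left fun c _ => ?_
    simp [precompConj_mulSingle]

lemma mem_leftInvSeq_of_reflectionCocycle_ne_one {ω : List B} {t : W}
    (h : cs.reflectionCocycle (cs.wordProd ω) t ≠ 1) : t ∈ cs.leftInvSeq ω := by
  contrapose! h
  rw [reflectionCocycle_wordProd, Pi.list_prod_apply]
  simp only [List.map_map]
  refine List.prod_eq_one fun a ha => ?_
  obtain ⟨c, hc, rfl⟩ := List.mem_map.mp ha
  exact Pi.mulSingle_eq_of_ne (ne_of_mem_of_not_mem hc h).symm _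

lemma reflectionCocycle_self {t : W} (ht : cs.IsReflection t) : cs.reflectionCocycle t t = -1 := by
  obtain ⟨u, i, rfl⟩ := ht
  have hcancel : cs.reflectionCocycle u (u * (cs.simple i * u⁻¹)) *
      cs.reflectionCocycle u⁻¹ (cs.simple i) = 1 := by
    have := cs.reflectionCocycle_mul_apply u u⁻¹ (u * cs.simple i * u⁻¹)
    rwa [mul_inv_cancel, reflectionCocycle, map_one, SemidirectProduct.one_left,
      show u⁻¹ * (u * cs.simple i * u⁻¹) * u = cs.simple i by group, eq_comm, mul_assoc u] at this
  rw [mul_assoc u, reflectionCocycle_mul_apply, reflectionCocycle_mul_apply,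
    show u⁻¹ * (u * (cs.simple i * u⁻¹)) * u = cs.simple i by group, cs.inv_simple,
    cs.simple_mul_simple_self, one_mul, reflectionCocycle_simple, Pi.mulSingle_eq_same,
    mul_left_comm, hcancel, mul_one]

end ReflectionCocycle

variable {cs : CoxeterSystem M W}

/- `N w t = -N (t w) t`; if `N w t = 1`, then `t` occurs in the left inversion sequence of a
reduced word for `t w`, so `t` would also be a left inversion of `t w`. -/
lemma reflectionCocycle_ne_one_of_isLeftInversion [DecidableEq W] {w t : W}
    (h : cs.IsLeftInversion w t) : cs.reflectionCocycle w t ≠ 1 := by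
  obtain ⟨ht, hlt⟩ := h
  intro hw
  have htw : t * (t * w) = w := by rw [← mul_assoc, ht.mul_self, one_mul]
  have hsplit := cs.reflectionCocycle_mul_apply t (t * w) t
  rw [htw, hw, ht.inv, ht.mul_self, one_mul, cs.reflectionCocycle_self ht] at hsplit
  have hne : cs.reflectionCocycle (t * w) t ≠ 1 := by
    rintro h
    rw [h] at hsplit
    exact absurd hsplit (by decide)
  obtain ⟨ω, hω, hω'⟩ := cs.exists_isReduced (t * w)
  rw [hω'] at hne
  have hlt' := (cs.isLeftInversion_of_mem_leftInvSeq hω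
    (cs.mem_leftInvSeq_of_reflectionCocycle_ne_one hne)).2
  rw [← hω', htw] at hlt'
  omega

theorem mem_leftInvSeq_of_isLeftInversion {ω : List B} {t : W}
    (h : cs.IsLeftInversion (cs.wordProd ω) t) : t ∈ cs.leftInvSeq ω := by
  classical
  exact cs.mem_leftInvSeq_of_reflectionCocycle_ne_one
    (reflectionCocycle_ne_one_of_isLeftInversion h)

theorem exists_wordProd_eraseIdx_eq_of_isLeftInversion {ω : List B} {t : W}
    (h : cs.IsLeftInversion (cs.wordProd ω) t) :
    ∃ j, cs.wordProd (ω.eraseIdx j) = t * cs.wordProd ω := by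
  obtain ⟨j, hj, rfl⟩ := List.getElem_of_mem (mem_leftInvSeq_of_isLeftInversion h)
  exact ⟨j, by rw [← cs.getD_leftInvSeq_mul_wordProd, List.getD_eq_getElem]⟩

theorem IsReflection.ne_one {t : W} (ht : cs.IsReflection t) : t ≠ 1 := by
  rintro rfl
  simpa using ht.odd_length

theorem IsReflection.neg_one_pow_length_mul {R : Type*} [Ring R] {t : W} (ht : cs.IsReflection t)
    (v : W) : (-1 : R) ^ cs.length (t * v) = -(-1) ^ cs.length v := by
  rw [neg_one_pow_eq_pow_mod_two, cs.length_mul_mod_two, ← neg_one_pow_eq_pow_mod_two, pow_add,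
    ht.odd_length.neg_one_pow, neg_one_mul]

lemma bruhatLE_mul_of_isLeftInversion {t w : W} (h : cs.IsLeftInversion w t) :
    bruhatLE cs (t * w) w :=
  .single ⟨t, h.1, by rw [← mul_assoc, h.1.mul_self, one_mul], h.2⟩

/- If `t' = s t s` shortens `s u`, exchange in the word `s :: ω` with `ω` reduced for `u`:
deleting the `s` gives `s u = t u`, deleting a letter of `ω` would give `ℓ (t u) < ℓ u`. -/
theorem eq_or_bruhatEdge_simple_mul {u v : W} (huv : bruhatEdge cs u v) (i : B) :
    cs.simple i * u = v ∨ bruhatEdge cs (cs.simple i * u) (cs.simple i * v) := by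
  obtain ⟨t, ht, rfl, hlt⟩ := huv
  set t' := cs.simple i * t * cs.simple i
  have ht' : cs.IsReflection t' := by simpa [t', cs.inv_simple] using ht.conj (cs.simple i)
  have hconj : t' * (cs.simple i * u) = cs.simple i * (t * u) := by
    simp only [t', mul_assoc, cs.simple_mul_simple_cancel_left]
  rcases lt_or_gt_of_ne (ht'.length_mul_right_ne (cs.simple i * u)) with hdown | hup
  · left
    obtain ⟨ω, hω, rfl⟩ := cs.exists_isReduced u
    obtain ⟨j, hj⟩ := exists_wordProd_eraseIdx_eq_of_isLeftInversion (ω := i :: ω)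
      ⟨ht', by rwa [cs.wordProd_cons]⟩
    rw [cs.wordProd_cons, hconj] at hj
    cases j with
    | zero =>
      rw [List.eraseIdx_cons_zero] at hj
      conv_lhs => rw [hj]
      exact cs.simple_mul_simple_cancel_left _
    | succ k =>
      rw [List.eraseIdx_cons_succ, cs.wordProd_cons] at hj
      have hle := cs.length_wordProd_le (ω.eraseIdx k)
      rw [mul_left_cancel hj] at hle
      have := List.length_eraseIdx_le ω k
      have := hω.eq
      omega
  · right
    exact ⟨t', ht', hconj.symm, hconj ▸ hup⟩

theorem bruhatLE_simple_mul_or {u w : W} (huw : bruhatLE cs u w) (i : B) :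
    bruhatLE cs (cs.simple i * u) w ∨ bruhatLE cs (cs.simple i * u) (cs.simple i * w) := by
  induction huw using Relation.ReflTransGen.head_induction_on with
  | refl => exact Or.inr .refl
  | head huv _ ih =>
    rcases eq_or_bruhatEdge_simple_mul huv i with heq | hedge
    · exact Or.inl (heq ▸ ‹_›)
    · exact ih.imp (.head hedge) (.head hedge)

theorem bruhatLE_simple_mul_of_isLeftDescent {v w : W} {i : B} (hi : cs.IsLeftDescent w i)
    (hv : bruhatLE cs v w) : bruhatLE cs (cs.simple i * v) w :=
  (bruhatLE_simple_mul_or hv i).elim id fun h =>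
    h.trans (bruhatLE_mul_of_isLeftInversion ⟨cs.isReflection_simple i, hi⟩)

theorem bruhatLE_mul_of_mem_parabolic {u v w : W}
    (hu : u ∈ parabolic cs {i | cs.IsLeftDescent w i}) (hv : bruhatLE cs v w) :
    bruhatLE cs (u * v) w := by
  induction hu using Subgroup.closure_induction'' generalizing v with
  | mem x hx =>
    obtain ⟨i, hi, rfl⟩ := hx
    exact bruhatLE_simple_mul_of_isLeftDescent hi hv
  | inv_mem x hx =>
    obtain ⟨i, hi, rfl⟩ := hx
    rw [cs.inv_simple]
    exact bruhatLE_simple_mul_of_isLeftDescent hi hv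
  | one => rwa [one_mul]
  | mul x y _ _ hx hy =>
    rw [mul_assoc]
    exact hx (hy hv)

end CoxeterSystem

open scoped Classical in
theorem lower_interval_sign_balanced_general [Fintype W]
    (cs : CoxeterSystem M W) (w : W) (t : W)
    (ht : cs.IsReflection t)
    (htP : t ∈ parabolic cs {i : B | cs.IsLeftDescent w i}) :
    (∀ v : W, bruhatLE cs v w → bruhatLE cs (t * v) w ∧ t * v ≠ v ∧ t * (t * v) = v) ∧
    ∑ v ∈ Finset.univ.filter (fun v => bruhatLE cs v w), (-1 : ℤ) ^ cs.length v = 0 := by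
  have hstable (v : W) (hv : bruhatLE cs v w) : bruhatLE cs (t * v) w :=
    bruhatLE_mul_of_mem_parabolic htP hv
  have hfree (v : W) : t * v ≠ v := fun h => ht.ne_one (mul_eq_right.mp h)
  have hinvol (v : W) : t * (t * v) = v := by rw [← mul_assoc, ht.mul_self, one_mul]
  refine ⟨fun v hv => ⟨hstable v hv, hfree v, hinvol v⟩, ?_⟩
  refine Finset.sum_involution (fun v _ => t * v)
    (fun v _ => by rw [ht.neg_one_pow_length_mul, add_neg_cancel]) (fun v _ _ => hfree v)
    (fun v hv => ?_) (fun v _ => hinvol v)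
  simp only [Finset.mem_filter, Finset.mem_univ, true_and] at hv ⊢
  exact hstable v hv

open scoped Classical in
/-- Multiplication by a reflection of `W_{D_L(w)}` is a fixed-point-free involution of `[e, w]`;
hence the lower interval is sign-balanced. -/
theorem lower_interval_sign_balanced [Fintype W]
    (cs : CoxeterSystem M W) (w : W) (hw : w ≠ 1) (t : W)
    (ht : cs.IsReflection t)
    (htP : t ∈ parabolic cs {i : B | cs.IsLeftDescent w i}) :
    (∀ v : W, bruhatLE cs v w → bruhatLE cs (t * v) w ∧ t * v ≠ v ∧ t * (t * v) = v) ∧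
    ∑ v ∈ Finset.univ.filter (fun v => bruhatLE cs v w), (-1 : ℤ) ^ cs.length v = 0 :=
  lower_interval_sign_balanced_general cs w t ht htP
end

section
/- Let W be a finite Coxeter group, w ∈ W, and v ≤ w in Bruhat order. Let t be a reflection with t ∈ W_{D_L(w)}. Then out_w(tv) − out_w(v) is odd, where out_w(x) = |{y ≤ w : x → y in the Bruhat graph}|. -/
open CoxeterSystem

variable {B W : Type*} [Group W] {M : CoxeterMatrix B}

/-- Out-degree in the lower interval `[e, w]`. -/
noncomputable def outDeg (cs : CoxeterSystem M W) (w x : W) : ℕ :=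
  Set.ncard {y : W | bruhatLE cs y w ∧ bruhatEdge cs x y}

/-!
For `x ≤ w`, the reflections `r` with `r x ≤ w` are the `ℓ(x)` left inversions of `x` together
with the reflections of the out-edges of `x` inside `[e, w]`, so there are `out_w(x) + ℓ(x)` of
them. Left multiplication by a left descent `s` of `w` maps `[e, w]` into itself, since an edge
`x → y` gives either `s x = y` or an edge `s x → s y`; hence so does every element of
`W_{D_L(w)}`. Therefore conjugation by `t` maps the reflections counted for `v` bijectively onto
those counted for `t v`, so
`out_w(tv) + ℓ(tv) = out_w(v) + ℓ(v)`, and `ℓ(tv) - ℓ(v)` is odd because `ℓ(t)` is.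

Both the count of left inversions and the lifting property rest on the reflection cocycle
`η = signCocycle : W → (W → ℤˣ)`, with `η(uv)(t) = η(u)(t) η(v)(u⁻¹tu)`, obtained by lifting
`s ↦ (χ_s, s)` to the semidirect product `(W → ℤˣ) ⋊ W` (`χ_s` being `-1` exactly at `s`):
`η(w)(t) = -1` exactly when `t` is a left inversion of `w`.
-/

namespace CoxeterSystem

def precompConj {A : Type*} [Mul A] : W →* MulAut (W → A) where
  toFun w := MulEquiv.arrowCongr (MulAut.conj w).toEquiv (MulEquiv.refl A)
  map_one' := by ext f t : 2; show f (1⁻¹ * t * 1) = f t; simp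
  map_mul' u v := by
    ext f t : 2; show f ((u * v)⁻¹ * t * (u * v)) = f (v⁻¹ * (u⁻¹ * t * u) * v); group

lemma precompConj_apply {A : Type*} [Mul A] (w : W) (f : W → A) (t : W) :
    precompConj w f t = f (w⁻¹ * t * w) := rfl

open Classical in
lemma precompConj_mulSingle {A : Type*} [MulOneClass A] (w u : W) (a : A) :
    precompConj w (Pi.mulSingle u a) = Pi.mulSingle (w * u * w⁻¹) a := by
  ext1 t
  rw [precompConj_apply]
  simp only [Pi.mulSingle_apply]
  congr 1
  simp only [eq_iff_iff]
  constructor <;> rintro rfl <;> group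

lemma pow_mul_mul_inv_pow_eq_pow_two_mul {G : Type*} [Group G] {a c : G}
    (hconj : c * a * c⁻¹ = c ^ 2 * a) (r : ℕ) : c ^ r * a * (c ^ r)⁻¹ = c ^ (2 * r) * a := by
  induction r with
  | zero => simp
  | succ r ih =>
    calc c ^ (r + 1) * a * (c ^ (r + 1))⁻¹ = c * (c ^ r * a * (c ^ r)⁻¹) * c⁻¹ := by group
      _ = c ^ (2 * r) * (c * a * c⁻¹) := by rw [ih]; group
      _ = c ^ (2 * (r + 1)) * a := by rw [hconj]; group

lemma prod_range_two_mul_eq_one_of_periodic {G : Type*} [CommMonoid G] (hG : ∀ x : G, x * x = 1)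
    {f : ℕ → G} {m : ℕ} (hf : ∀ k, f (m + k) = f k) : ∏ k ∈ Finset.range (2 * m), f k = 1 := by
  rw [two_mul, Finset.prod_range_add]
  simp only [hf, hG]

variable (cs : CoxeterSystem M W)

local prefix:100 "s " => cs.simple

open Classical in
noncomputable def cocycleGen (i : B) : (W → ℤˣ) ⋊[precompConj] W :=
  ⟨Pi.mulSingle (s i) (-1), s i⟩

open Classical in
lemma cocycleGen_mul_cocycleGen (i j : B) :
    cs.cocycleGen i * cs.cocycleGen j =
      ⟨Pi.mulSingle (s i) (-1) * Pi.mulSingle (s i * s j * s i) (-1), s i * s j⟩ := by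
  rw [cocycleGen, cocycleGen, SemidirectProduct.mul_def, precompConj_mulSingle, inv_simple]

lemma simple_mul_simple_conj_simple (i j : B) :
    (s i * s j) * s i * (s i * s j)⁻¹ = (s i * s j) ^ 2 * s i := by
  simp only [mul_inv_rev, inv_simple, sq, mul_assoc]

open Classical in
lemma cocycleGen_mul_pow (i j : B) (r : ℕ) :
    (cs.cocycleGen i * cs.cocycleGen j) ^ r =
      ⟨∏ k ∈ Finset.range (2 * r), Pi.mulSingle ((s i * s j) ^ k * s i) (-1), (s i * s j) ^ r⟩ := by
  induction r with
  | zero => ext1 <;> simp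
  | succ r ih =>
    have hconj := pow_mul_mul_inv_pow_eq_pow_two_mul (cs.simple_mul_simple_conj_simple i j) r
    have hconj' : (s i * s j) ^ r * (s i * s j * s i) * ((s i * s j) ^ r)⁻¹ =
        (s i * s j) ^ (2 * r + 1) * s i := by
      have hcomm : ∀ a c : W, c ^ r * (c * a) * (c ^ r)⁻¹ = c * (c ^ r * a * (c ^ r)⁻¹) :=
        fun a c => by group
      rw [hcomm, hconj]; simp only [pow_succ', mul_assoc]
    rw [pow_succ, ih, cocycleGen_mul_cocycleGen]
    ext1
    · simp only [SemidirectProduct.mul_left, map_mul, precompConj_mulSingle, hconj, hconj']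
      rw [show 2 * (r + 1) = 2 * r + 1 + 1 by ring, Finset.prod_range_succ,
        Finset.prod_range_succ, mul_assoc]
    · simp only [SemidirectProduct.mul_right, pow_succ]

lemma isLiftable_cocycleGen : M.IsLiftable cs.cocycleGen := by
  intro i j
  rw [cocycleGen_mul_pow]
  ext1
  · exact prod_range_two_mul_eq_one_of_periodic (fun f => funext fun t => Int.units_mul_self (f t))
      fun k => by rw [pow_add, cs.simple_mul_simple_pow, one_mul]
  · exact cs.simple_mul_simple_pow i j

noncomputable def cocycleLift : W →* (W → ℤˣ) ⋊[precompConj] W :=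
  cs.lift ⟨cs.cocycleGen, cs.isLiftable_cocycleGen⟩

lemma cocycleLift_simple (i : B) : cs.cocycleLift (s i) = cs.cocycleGen i :=
  cs.lift_apply_simple cs.isLiftable_cocycleGen i

lemma right_cocycleLift (w : W) : (cs.cocycleLift w).right = w := by
  have : SemidirectProduct.rightHom.comp cs.cocycleLift = MonoidHom.id W :=
    cs.ext_simple fun i => by simp [cocycleLift_simple, cocycleGen]
  exact DFunLike.congr_fun this w

noncomputable def signCocycle (w : W) : W → ℤˣ := (cs.cocycleLift w).left

lemma signCocycle_one : cs.signCocycle 1 = 1 := by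
  simp [signCocycle]

lemma signCocycle_mul (u v : W) :
    cs.signCocycle (u * v) = cs.signCocycle u * precompConj u (cs.signCocycle v) := by
  rw [signCocycle, map_mul, SemidirectProduct.mul_left, right_cocycleLift]
  rfl

lemma signCocycle_mul_apply (u v t : W) :
    cs.signCocycle (u * v) t = cs.signCocycle u t * cs.signCocycle v (u⁻¹ * t * u) := by
  rw [signCocycle_mul, Pi.mul_apply, precompConj_apply]

open Classical in
lemma signCocycle_simple (i : B) : cs.signCocycle (s i) = Pi.mulSingle (s i) (-1) := by
  rw [signCocycle, cocycleLift_simple]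
  rfl

lemma signCocycle_inv (w t : W) : cs.signCocycle w⁻¹ t = cs.signCocycle w (w * t * w⁻¹) := by
  have h := cs.signCocycle_mul_apply w w⁻¹ (w * t * w⁻¹)
  rw [mul_inv_cancel, signCocycle_one, show w⁻¹ * (w * t * w⁻¹) * w = t by group,
    Pi.one_apply] at h
  rw [eq_inv_of_mul_eq_one_right h.symm, Int.units_inv_eq_self]

open Classical in
lemma signCocycle_wordProd (ω : List B) :
    cs.signCocycle (cs.wordProd ω) = ((cs.leftInvSeq ω).map fun u => Pi.mulSingle u (-1)).prod := by
  induction ω with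
  | nil => exact cs.signCocycle_one
  | cons i ω ih =>
    rw [wordProd_cons, signCocycle_mul, ih, signCocycle_simple, leftInvSeq, map_list_prod]
    simp only [List.map_cons, List.prod_cons, List.map_map]
    congr 2
    exact List.map_congr_left fun u _ => precompConj_mulSingle _ _ _

open Classical in
lemma signCocycle_wordProd_apply {ω : List B} (hω : cs.IsReduced ω) (t : W) :
    cs.signCocycle (cs.wordProd ω) t = if t ∈ cs.leftInvSeq ω then -1 else 1 := by
  rw [signCocycle_wordProd, ← List.prod_toFinset _ hω.nodup_leftInvSeq, Finset.prod_apply,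
    Finset.prod_pi_mulSingle]
  simp only [List.mem_toFinset]

variable {cs} in
lemma IsReflection.signCocycle_self {t : W} (ht : cs.IsReflection t) :
    cs.signCocycle t t = -1 := by
  classical
  obtain ⟨u, i, rfl⟩ := ht
  have h₁ := cs.signCocycle_mul_apply u (s i * u⁻¹) (u * s i * u⁻¹)
  have h₂ := cs.signCocycle_mul_apply (s i) u⁻¹ (s i)
  rw [← mul_assoc, show u⁻¹ * (u * s i * u⁻¹) * u = s i by group] at h₁
  rw [inv_simple, simple_mul_simple_self, one_mul] at h₂
  rw [h₁, h₂, signCocycle_simple, Pi.mulSingle_eq_same, signCocycle_inv, mul_left_comm,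
    Int.units_mul_self, mul_one]

theorem isLeftInversion_of_signCocycle_eq_neg_one {w t : W} (h : cs.signCocycle w t = -1) :
    cs.IsLeftInversion w t := by
  obtain ⟨ω, hω, rfl⟩ := cs.exists_isReduced w
  rw [signCocycle_wordProd_apply cs hω] at h
  split_ifs at h with hmem
  · exact cs.isLeftInversion_of_mem_leftInvSeq hω hmem
  · exact absurd h (by decide)

theorem signCocycle_eq_neg_one_iff {w t : W} (ht : cs.IsReflection t) :
    cs.signCocycle w t = -1 ↔ cs.IsLeftInversion w t := by
  refine ⟨cs.isLeftInversion_of_signCocycle_eq_neg_one, fun hinv => ?_⟩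
  have hflip : cs.signCocycle w t = -cs.signCocycle (t * w) t := by
    conv_lhs => rw [← one_mul w, ← ht.mul_self, mul_assoc]
    rw [signCocycle_mul_apply, ht.signCocycle_self, inv_mul_cancel, one_mul, neg_one_mul]
  rcases Int.units_eq_one_or (cs.signCocycle w t) with h | h
  · have hlt := (cs.isLeftInversion_of_signCocycle_eq_neg_one
      (by rw [← neg_neg (cs.signCocycle (t * w) t), ← hflip, h])).2
    rw [← mul_assoc, ht.mul_self, one_mul] at hlt
    exact absurd hinv.2 (not_lt.mpr hlt.le)
  · exact h

variable {cs} in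
lemma IsReflection.simple_conj {t : W} (ht : cs.IsReflection t) (i : B) :
    cs.IsReflection (s i * t * s i) := by
  simpa using ht.conj (s i)

theorem isLeftInversion_simple_mul_iff {w t : W} {i : B} (ht : cs.IsReflection t)
    (hti : t ≠ s i) :
    cs.IsLeftInversion (s i * w) t ↔ cs.IsLeftInversion w (s i * t * s i) := by
  classical
  rw [← signCocycle_eq_neg_one_iff cs ht, ← signCocycle_eq_neg_one_iff cs (ht.simple_conj i),
    signCocycle_mul_apply, signCocycle_simple, Pi.mulSingle_eq_of_ne hti, one_mul, inv_simple]

theorem mem_leftInvSeq_iff_isLeftInversion {ω : List B} (hω : cs.IsReduced ω) {t : W} :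
    t ∈ cs.leftInvSeq ω ↔ cs.IsLeftInversion (cs.wordProd ω) t := by
  refine ⟨cs.isLeftInversion_of_mem_leftInvSeq hω, fun h => ?_⟩
  classical
  have := (signCocycle_eq_neg_one_iff cs h.1).2 h
  rw [signCocycle_wordProd_apply cs hω] at this
  by_contra hmem
  rw [if_neg hmem] at this
  exact absurd this (by decide)

theorem ncard_setOf_isLeftInversion (w : W) : {t | cs.IsLeftInversion w t}.ncard = cs.length w := by
  classical
  obtain ⟨ω, hω, rfl⟩ := cs.exists_isReduced w
  have hset : {t | cs.IsLeftInversion (cs.wordProd ω) t} = (cs.leftInvSeq ω).toFinset := by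
    ext t
    simp [mem_leftInvSeq_iff_isLeftInversion cs hω]
  rw [hset, Set.ncard_coe_finset, List.toFinset_card_of_nodup hω.nodup_leftInvSeq,
    length_leftInvSeq, hω]

end CoxeterSystem

section Bruhat

variable (cs : CoxeterSystem M W)

theorem bruhatEdge.simple_mul_or {x y : W} (h : bruhatEdge cs x y) (i : B) :
    cs.simple i * x = y ∨ bruhatEdge cs (cs.simple i * x) (cs.simple i * y) := by
  obtain ⟨r, hr, rfl, hlen⟩ := h
  by_cases hri : r = cs.simple i
  · exact Or.inl (hri ▸ rfl)
  have hrr : r * (r * x) = x := by rw [← mul_assoc, hr.mul_self, one_mul]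
  have hconj : cs.simple i * r * cs.simple i ≠ cs.simple i := fun h => hri (by
    simpa [mul_assoc] using congrArg (fun g => cs.simple i * g * cs.simple i) h)
  have hinv : cs.IsLeftInversion (cs.simple i * (r * x)) (cs.simple i * r * cs.simple i) := by
    rw [cs.isLeftInversion_simple_mul_iff (hr.simple_conj i) hconj]
    refine ⟨by simpa [mul_assoc] using hr, ?_⟩
    simpa [mul_assoc, hrr] using hlen
  refine Or.inr ⟨cs.simple i * r * cs.simple i, hr.simple_conj i, by simp [mul_assoc], ?_⟩
  simpa [mul_assoc, hrr] using hinv.2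

theorem bruhatLE_simple_mul_of_isLeftDescent {w x : W} {i : B} (hi : cs.IsLeftDescent w i)
    (hx : bruhatLE cs x w) : bruhatLE cs (cs.simple i * x) w := by
  induction hx using Relation.ReflTransGen.head_induction_on with
  | refl =>
    refine Relation.ReflTransGen.single ⟨cs.simple i, cs.isReflection_simple i, ?_, hi⟩
    rw [simple_mul_simple_cancel_left]
  | head hxy hyw ih =>
    rcases hxy.simple_mul_or cs i with h | h
    · exact h ▸ hyw
    · exact Relation.ReflTransGen.head h ih

theorem bruhatLE_mul_of_mem_parabolic {w x t : W}
    (ht : t ∈ parabolic cs {i : B | cs.IsLeftDescent w i}) (hx : bruhatLE cs x w) :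
    bruhatLE cs (t * x) w := by
  induction ht using Subgroup.closure_induction_left generalizing x with
  | one => simpa using hx
  | mul_left _ hs _ _ ih =>
    obtain ⟨i, hi, rfl⟩ := hs
    rw [mul_assoc]
    exact bruhatLE_simple_mul_of_isLeftDescent cs hi (ih hx)
  | inv_mul_cancel _ hs _ _ ih =>
    obtain ⟨i, hi, rfl⟩ := hs
    rw [inv_simple, mul_assoc]
    exact bruhatLE_simple_mul_of_isLeftDescent cs hi (ih hx)

theorem outDeg_eq_ncard (w x : W) :
    outDeg cs w x = {r : W | cs.IsReflection r ∧ cs.length x < cs.length (r * x) ∧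
      bruhatLE cs (r * x) w}.ncard := by
  have himage : {y : W | bruhatLE cs y w ∧ bruhatEdge cs x y} = (· * x) '' {r : W |
      cs.IsReflection r ∧ cs.length x < cs.length (r * x) ∧ bruhatLE cs (r * x) w} := by
    ext y
    constructor
    · rintro ⟨hle, r, hr, rfl, hlen⟩
      exact ⟨r, ⟨hr, hlen, hle⟩, rfl⟩
    · rintro ⟨r, ⟨hr, hlen, hle⟩, rfl⟩
      exact ⟨hle, r, hr, rfl, hlen⟩
  rw [outDeg, himage, Set.ncard_image_of_injective _ (mul_left_injective x)]

theorem ncard_reflections_mul_bruhatLE [Finite W] {w x : W} (hx : bruhatLE cs x w) :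
    {r : W | cs.IsReflection r ∧ bruhatLE cs (r * x) w}.ncard = outDeg cs w x + cs.length x := by
  have hsplit : {r : W | cs.IsReflection r ∧ bruhatLE cs (r * x) w} =
      {r : W | cs.IsReflection r ∧ cs.length x < cs.length (r * x) ∧ bruhatLE cs (r * x) w} ∪
        {r | cs.IsLeftInversion x r} := by
    ext r
    constructor
    · rintro ⟨hr, hle⟩
      rcases (hr.length_mul_right_ne x).lt_or_gt with hlt | hgt
      · exact Or.inr ⟨hr, hlt⟩
      · exact Or.inl ⟨hr, hgt, hle⟩
    · rintro (⟨hr, -, hle⟩ | ⟨hr, hlt⟩)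
      · exact ⟨hr, hle⟩
      · refine ⟨hr, Relation.ReflTransGen.head ⟨r, hr, ?_, hlt⟩ hx⟩
        rw [← mul_assoc, hr.mul_self, one_mul]
  have hdisj : Disjoint
      {r : W | cs.IsReflection r ∧ cs.length x < cs.length (r * x) ∧ bruhatLE cs (r * x) w}
      {r | cs.IsLeftInversion x r} :=
    Set.disjoint_left.2 fun r ⟨_, hgt, _⟩ ⟨_, hlt⟩ => (hgt.trans hlt).false
  rw [hsplit, Set.ncard_union_eq hdisj, ← outDeg_eq_ncard, ncard_setOf_isLeftInversion]

theorem reflections_mul_bruhatLE_eq_image {w x t : W} (ht : cs.IsReflection t)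
    (htP : t ∈ parabolic cs {i : B | cs.IsLeftDescent w i}) :
    {r : W | cs.IsReflection r ∧ bruhatLE cs (r * (t * x)) w} =
      MulAut.conj t '' {r : W | cs.IsReflection r ∧ bruhatLE cs (r * x) w} := by
  have htt : ∀ y, t * (t * y) = y := fun y => by rw [← mul_assoc, ht.mul_self, one_mul]
  have hconj : ∀ {r}, cs.IsReflection r → cs.IsReflection (t * r * t) := fun hr => by
    simpa [ht.inv] using hr.conj t
  ext r
  simp only [Set.mem_image, Set.mem_ofPred_eq, MulAut.conj_apply, ht.inv]
  constructor
  · rintro ⟨hr, hle⟩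
    refine ⟨t * r * t, ⟨hconj hr, ?_⟩, by simp [mul_assoc, htt, ht.mul_self]⟩
    simpa [mul_assoc] using bruhatLE_mul_of_mem_parabolic cs htP hle
  · rintro ⟨r, ⟨hr, hle⟩, rfl⟩
    refine ⟨hconj hr, ?_⟩
    simpa [mul_assoc, htt] using bruhatLE_mul_of_mem_parabolic cs htP hle

end Bruhat

/-- The out-degrees of `v` and `tv` in `[e, w]` differ by an odd number, for `t` a reflection
lying in the parabolic subgroup generated by the left descents of `w`. -/
theorem outDeg_parity [Finite W]
    (cs : CoxeterSystem M W) (w v : W) (hv : bruhatLE cs v w) (t : W)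
    (ht : cs.IsReflection t)
    (htP : t ∈ parabolic cs {i : B | cs.IsLeftDescent w i}) :
    Odd ((outDeg cs w (t * v) : ℤ) - (outDeg cs w v : ℤ)) := by
  have hcount := ncard_reflections_mul_bruhatLE cs (bruhatLE_mul_of_mem_parabolic cs htP hv)
  rw [reflections_mul_bruhatLE_eq_image cs ht htP,
    Set.ncard_image_of_injective _ (MulAut.conj t).injective,
    ncard_reflections_mul_bruhatLE cs hv] at hcount
  have hlen := cs.length_mul_mod_two t v
  have hodd := Nat.odd_iff.mp ht.odd_length
  rw [Int.odd_iff]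
  omega
end
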